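/- Let d ≥ 1 and let H be a finite d-regular simple graph with a vertex v such that the neighborhood N(v) is an independent set and the graph obtained from H by deleting v and all vertices of N(v) is connected. Then there exists a finite graph G containing no copy of H, together with an independent set S of 2d − 1 vertices of G, such that for every subset S' ⊆ S of size d, the graph obtained from G by adding one new vertex adjacent exactly to the vertices of S' contains a copy of H. -/

import Mathlib

/-!
The graph `G` is an independent set `σ` of `2d − 1` vertices together with, for every
`d`-subset `A ⊆ σ`, a copy of `H − v − N(v)` whose edges to `N(v)` are redirected to `A` along
a bijection `N(v) ≃ A`. A new vertex joined to `A` completes the `A`-th copy to a copy of `H`.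

Conversely, a vertex of a copy of `H − v − N(v)` has degree at most `d` in `G`, so an embedding
of the `d`-regular `H` that hits it also hits all its neighbours. By connectivity of
`H − v − N(v)` the embedding then covers that whole copy and, when `d ≥ 2`, all of `A`. Two hit
copies would need `2|H − v − N(v)| + d + 1 > |V(H)|` vertices (for `d = 1` there is only one
copy), so a single copy `A` is hit. Every vertex of `H` sent into `σ` has a neighbour, which lands
in that copy, so it is sent into `A`; hence `H` would embed into the copy together with `A`,
which has only `|V(H)| − 1` vertices.
-/

open SimpleGraph

/-- The subgraph of `F` consisting of the edges that receive color `b` under the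
edge 2-coloring `c` (colors are `Bool`: `true` = red, `false` = blue). -/
def colorSubgraph {V : Type*} (F : SimpleGraph V) (c : Sym2 V → Bool) (b : Bool) :
    SimpleGraph V where
  Adj x y := F.Adj x y ∧ c s(x, y) = b
  symm := by
    constructor
    intro x y h
    exact ⟨h.1.symm, by rw [Sym2.eq_swap]; exact h.2⟩
  loopless := by
    constructor
    intro x h
    exact F.irrefl h.1

/-- `G` contains a copy of `H`, i.e. a subgraph isomorphic to `H`. -/
def ContainsCopy {V W : Type*} (G : SimpleGraph V) (H : SimpleGraph W) : Prop :=
  ∃ f : W → V, Function.Injective f ∧ ∀ ⦃a b⦄, H.Adj a b → G.Adj (f a) (f b)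

/-- The 2-coloring `c` of (the edges of) `F` contains a monochromatic copy of `H`. -/
def HasMonoCopy {V W : Type*} (F : SimpleGraph V) (H : SimpleGraph W)
    (c : Sym2 V → Bool) : Prop :=
  ∃ b : Bool, ContainsCopy (colorSubgraph F c b) H

/-- `F → H`: every 2-coloring of the edges of `F` contains a monochromatic copy of `H`. -/
def IsRamseyFor {V W : Type*} (F : SimpleGraph V) (H : SimpleGraph W) : Prop :=
  ∀ c : Sym2 V → Bool, HasMonoCopy F H c

/-- `F` is Ramsey `H`-minimal: `F → H` but no proper subgraph of `F` is Ramsey for `H`. -/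
def IsRamseyMinimalFor {V W : Type*} (F : SimpleGraph V) (H : SimpleGraph W) : Prop :=
  IsRamseyFor F H ∧ ∀ F' : F.Subgraph, F' ≠ ⊤ → ¬ IsRamseyFor F'.coe H

/-- The degree of the vertex `v` in `G`. -/
noncomputable def degOf {V : Type*} (G : SimpleGraph V) (v : V) : ℕ :=
  (G.neighborSet v).ncard

/-- The minimum degree `δ(G)`. -/
noncomputable def minDeg {V : Type*} (G : SimpleGraph V) : ℕ :=
  sInf {k | ∃ v, degOf G v = k}

/-- `s(H)`: the minimum of `δ(F)` over all Ramsey `H`-minimal graphs `F`. -/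
noncomputable def sVal {W : Type*} (H : SimpleGraph W) : ℕ :=
  sInf {k | ∃ (n : ℕ) (F : SimpleGraph (Fin n)), IsRamseyMinimalFor F H ∧ minDeg F = k}

/-- The graph obtained from `G` by adding one new vertex (`none`) adjacent exactly to
the vertices of `S'`. -/
def addVertex {V : Type*} (G : SimpleGraph V) (S' : Set V) : SimpleGraph (Option V) :=
  SimpleGraph.fromRel (fun x y =>
    ∃ a, x = some a ∧ (y = none ∧ a ∈ S' ∨ ∃ b, y = some b ∧ G.Adj a b))

theorem Finset.exists_embedding_range_eq {α β : Type*} [Finite α] (s : Finset β)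
    (h : Nat.card α = s.card) : ∃ φ : α ↪ β, Set.range φ = s := by
  obtain ⟨e⟩ := Finite.card_eq.1 (h.trans (Nat.card_eq_finsetCard s).symm)
  exact ⟨e.toEmbedding.trans (.subtype _),
    (e.surjective.range_comp Subtype.val).trans Subtype.range_coe_subtype⟩

theorem Set.ncard_image_inl_union_image_inr {α β : Type*} {s : Set α} {t : Set β}
    (hs : s.Finite := by toFinite_tac) (ht : t.Finite := by toFinite_tac) :
    (Sum.inl '' s ∪ Sum.inr '' t).ncard = s.ncard + t.ncard := by
  rw [Set.ncard_union_eq Set.disjoint_image_inl_image_inr (hs.image _) (ht.image _),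
    Set.ncard_image_of_injective _ Sum.inl_injective,
    Set.ncard_image_of_injective _ Sum.inr_injective]

theorem Set.ncard_lt_ncard_union_of_ne {α : Type*} {s t : Set α} (hst : s ≠ t)
    (h : s.ncard = t.ncard) (hfin : (s ∪ t).Finite := by toFinite_tac) :
    s.ncard < (s ∪ t).ncard := by
  refine Set.ncard_lt_ncard
    (Set.ssubset_iff_subset_ne.2 ⟨Set.subset_union_left, fun hs => ?_⟩) hfin
  have hts : t ⊆ s := hs ▸ Set.subset_union_right
  exact hst (Set.eq_of_subset_of_ncard_le hts h.le (hfin.subset Set.subset_union_left)).symm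

namespace SimpleGraph

variable {V W σ ι : Type*}

theorem containsCopy_iff_isContained {G : SimpleGraph V} {H : SimpleGraph W} :
    ContainsCopy G H ↔ H ⊑ G :=
  ⟨fun ⟨f, hf, hadj⟩ => ⟨⟨⟨f, @hadj⟩, hf⟩⟩,
    fun ⟨c⟩ => ⟨c, c.injective, fun _ _ => c.toHom.map_adj⟩⟩

section AddVertex

variable {G : SimpleGraph V} {S : Set V} {a b : V}

@[simp] theorem addVertex_adj_none_some : (addVertex G S).Adj none (some a) ↔ a ∈ S := by
  simp [addVertex]

@[simp] theorem addVertex_adj_some_none : (addVertex G S).Adj (some a) none ↔ a ∈ S := by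
  simp [addVertex]

@[simp] theorem addVertex_adj_some_some : (addVertex G S).Adj (some a) (some b) ↔ G.Adj a b := by
  simp only [addVertex, fromRel_adj, ne_eq, Option.some.injEq, reduceCtorEq, false_and,
    exists_eq_left', false_or]
  exact ⟨fun h => h.2.elim id .symm, fun h => ⟨h.ne, .inl h⟩⟩

def Iso.addVertex {G' : SimpleGraph W} (e : G ≃g G') (S : Set V) :
    _root_.addVertex G S ≃g _root_.addVertex G' (e '' S) where
  toEquiv := e.toEquiv.optionCongr
  map_rel_iff' := by
    rintro (_ | a) (_ | b) <;> simp [e.injective.mem_set_image, e.map_adj_iff]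

end AddVertex

section Gadget

variable {H : SimpleGraph V} {v : V}

/-- The vertex set of `H − v − N(v)`. -/
abbrev farSet (H : SimpleGraph V) (v : V) : Set V := ({v} ∪ H.neighborSet v)ᶜ

theorem mem_farSet {u : V} : u ∈ farSet H v ↔ u ≠ v ∧ ¬ H.Adj v u := by
  simp

theorem eq_or_adj_or_mem_farSet (H : SimpleGraph V) (v u : V) :
    u = v ∨ H.Adj v u ∨ u ∈ farSet H v := by
  by_cases huv : u = v
  · exact .inl huv
  · by_cases hvu : H.Adj v u
    · exact .inr (.inl hvu)
    · exact .inr (.inr (mem_farSet.2 ⟨huv, hvu⟩))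

/-- One copy of `H − v − N(v)` for each `i : ι`, attached to a common independent set `σ`:
in the `i`-th copy, each neighbour `y` of `v` is replaced by the vertex `φ i y` of `σ`. -/
def gadget (φ : ι → H.neighborSet v ↪ σ) : SimpleGraph (σ ⊕ ι × farSet H v) where
  Adj
    | .inl _, .inl _ => False
    | .inl s, .inr (i, x) | .inr (i, x), .inl s => ∃ y, φ i y = s ∧ H.Adj y x
    | .inr (i, x), .inr (j, x') => i = j ∧ H.Adj x x'
  symm := ⟨by rintro (_ | _) (_ | _) h <;> first | exact h | exact ⟨h.1.symm, h.2.symm⟩⟩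
  loopless := ⟨by rintro (_ | ⟨_, x⟩) h; exacts [h, H.irrefl h.2]⟩

variable {φ : ι → H.neighborSet v ↪ σ}

@[simp] theorem gadget_adj_inl_inl {s t : σ} : ¬ (gadget φ).Adj (.inl s) (.inl t) := id

@[simp] theorem gadget_adj_inl_inr {s : σ} {i : ι} {x : farSet H v} :
    (gadget φ).Adj (.inl s) (.inr (i, x)) ↔ ∃ y, φ i y = s ∧ H.Adj y x := .rfl

@[simp] theorem gadget_adj_inr_inl {s : σ} {i : ι} {x : farSet H v} :
    (gadget φ).Adj (.inr (i, x)) (.inl s) ↔ ∃ y, φ i y = s ∧ H.Adj y x := .rfl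

@[simp] theorem gadget_adj_inr_inr {i j : ι} {x x' : farSet H v} :
    (gadget φ).Adj (.inr (i, x)) (.inr (j, x')) ↔ i = j ∧ H.Adj x x' := .rfl

variable (φ) in
open Classical in
noncomputable def copyMap (i : ι) (u : V) : Option (σ ⊕ ι × farSet H v) :=
  if hu : H.Adj v u then some (.inl (φ i ⟨u, hu⟩))
  else if hR : u ∈ farSet H v then some (.inr (i, ⟨u, hR⟩)) else none

theorem copyMap_self (i : ι) : copyMap φ i v = none := by
  simp [copyMap]

theorem copyMap_of_adj (i : ι) {u : V} (hu : H.Adj v u) :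
    copyMap φ i u = some (.inl (φ i ⟨u, hu⟩)) := by
  simp [copyMap, hu]

theorem copyMap_of_mem (i : ι) {u : V} (hR : u ∈ farSet H v) :
    copyMap φ i u = some (.inr (i, ⟨u, hR⟩)) := by
  rw [copyMap, dif_neg (mem_farSet.1 hR).2, dif_pos hR]

theorem copyMap_injective (i : ι) : Function.Injective (copyMap φ i) := by
  intro a b h
  rcases H.eq_or_adj_or_mem_farSet v a with ha | ha | ha <;>
  rcases H.eq_or_adj_or_mem_farSet v b with hb | hb | hb <;>
    simp_all [copyMap_self, copyMap_of_adj, copyMap_of_mem]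
  exact congrArg Subtype.val h

theorem isContained_addVertex_gadget
    (hindep : ∀ x ∈ H.neighborSet v, ∀ y ∈ H.neighborSet v, ¬ H.Adj x y) (i : ι) :
    H ⊑ addVertex (gadget φ) (Set.range (Sum.inl ∘ φ i)) := by
  refine ⟨⟨⟨copyMap φ i, fun {a b} hab => ?_⟩, copyMap_injective i⟩⟩
  rcases H.eq_or_adj_or_mem_farSet v a with ha | ha | ha <;>
  rcases H.eq_or_adj_or_mem_farSet v b with hb | hb | hb <;>
    simp_all [copyMap_self, copyMap_of_adj, copyMap_of_mem]
  all_goals first | exact hab.symm | exact ha.2 hab.symm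

theorem encard_neighborSet_gadget_le (i : ι) (x : farSet H v) :
    ((gadget φ).neighborSet (.inr (i, x))).encard ≤ (H.neighborSet x).encard := by
  have hsub : some '' (gadget φ).neighborSet (.inr (i, x)) ⊆ copyMap φ i '' H.neighborSet x := by
    rintro _ ⟨s | ⟨j, x'⟩, h, rfl⟩
    · obtain ⟨y, rfl, hyx⟩ := h
      exact ⟨y, hyx.symm, copyMap_of_adj i y.2⟩
    · obtain ⟨rfl, hxx'⟩ := h
      exact ⟨x', hxx', copyMap_of_mem i x'.2⟩
  calc _ = (some '' (gadget φ).neighborSet (.inr (i, x))).encard :=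
        ((Option.some_injective _).encard_image _).symm
    _ ≤ (copyMap φ i '' H.neighborSet x).encard := Set.encard_le_encard hsub
    _ ≤ _ := Set.encard_image_le _ _

theorem encard_neighborSet_eq_of_degOf [Finite V] {d : ℕ} (hreg : ∀ w, degOf H w = d) (w : V) :
    (H.neighborSet w).encard = d := by
  rw [← (Set.toFinite _).cast_ncard_eq]
  exact congrArg _ (hreg w)

theorem one_add_add_ncard_farSet [Finite V] {d : ℕ} (hreg : ∀ w, degOf H w = d) :
    1 + d + (farSet H v).ncard = Nat.card V := by
  rw [← Set.ncard_add_ncard_compl ({v} ∪ H.neighborSet v)]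
  congr 1
  rw [Set.singleton_union, Set.ncard_insert_of_notMem (by simp), ← degOf, hreg, add_comm]

theorem ncard_range_of_degOf [Finite V] {d : ℕ} (hreg : ∀ w, degOf H w = d) (i : ι) :
    (Set.range (φ i)).ncard = d := by
  rw [Set.ncard_range_of_injective (φ i).injective, Nat.card_coe_set_eq, ← degOf, hreg]

section Copy

variable {d : ℕ} {f : H.Copy (gadget φ)} {a : V} {i : ι} {x : farSet H v}

theorem image_neighborSet_eq_of_apply_eq_inr [Finite V] (hreg : ∀ w, degOf H w = d)
    (ha : f a = .inr (i, x)) : f '' H.neighborSet a = (gadget φ).neighborSet (.inr (i, x)) := by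
  refine (Set.toFinite _).eq_of_subset_of_encard_le ?_ ?_
  · rintro _ ⟨u, hu, rfl⟩
    rw [mem_neighborSet, ← ha]
    exact f.toHom.map_adj hu
  · rw [Function.Injective.encard_image (f := f) f.injective, encard_neighborSet_eq_of_degOf hreg,
      ← encard_neighborSet_eq_of_degOf hreg x]
    exact encard_neighborSet_gadget_le i x

theorem exists_apply_eq_inr_of_apply_eq_inr [Finite V] (hreg : ∀ w, degOf H w = d)
    (hconn : (H.induce (farSet H v)).Connected) (ha : f a = .inr (i, x)) (x' : farSet H v) :
    ∃ b, f b = .inr (i, x') := by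
  obtain ⟨p⟩ := hconn.preconnected x x'
  induction p generalizing a with
  | nil => exact ⟨a, ha⟩
  | cons hadj _ ih =>
    have hmem : Sum.inr (i, _) ∈ (gadget φ).neighborSet (.inr (i, _)) := ⟨rfl, hadj⟩
    rw [← image_neighborSet_eq_of_apply_eq_inr hreg ha] at hmem
    obtain ⟨b, -, hb⟩ := hmem
    exact ih hb

theorem exists_apply_eq_inl_of_apply_eq_inr [Finite V] (hd : 2 ≤ d)
    (hreg : ∀ w, degOf H w = d)
    (hindep : ∀ x ∈ H.neighborSet v, ∀ y ∈ H.neighborSet v, ¬ H.Adj x y)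
    (hconn : (H.induce (farSet H v)).Connected) (ha : f a = .inr (i, x))
    (y : H.neighborSet v) : ∃ c, f c = .inl (φ i y) := by
  obtain ⟨u, hyu, huv⟩ :=
    Set.exists_ne_of_one_lt_ncard (s := H.neighborSet y) (by rw [← degOf, hreg]; omega) v
  have hu : u ∈ farSet H v := mem_farSet.2 ⟨huv, fun hvu => hindep y y.2 u hvu hyu⟩
  obtain ⟨b, hb⟩ := exists_apply_eq_inr_of_apply_eq_inr hreg hconn ha ⟨u, hu⟩
  have hmem : Sum.inl (φ i y) ∈ (gadget φ).neighborSet (.inr (i, ⟨u, hu⟩)) := ⟨y, rfl, hyu⟩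
  rw [← image_neighborSet_eq_of_apply_eq_inr hreg hb] at hmem
  obtain ⟨c, -, hc⟩ := hmem
  exact ⟨c, hc⟩

theorem index_eq_of_apply_eq_inr [Finite V] (hreg : ∀ w, degOf H w = d)
    (hindep : ∀ x ∈ H.neighborSet v, ∀ y ∈ H.neighborSet v, ¬ H.Adj x y)
    (hconn : (H.induce (farSet H v)).Connected)
    (hφ : Function.Injective fun i => Set.range (φ i)) (hι : 2 ≤ d ∨ Subsingleton ι)
    {b : V} {j : ι} {y : farSet H v} (ha : f a = .inr (i, x)) (hb : f b = .inr (j, y)) :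
    i = j := by
  by_contra hij
  obtain hd | _ := hι
  swap
  · exact hij (Subsingleton.elim i j)
  have hsub : Sum.inl '' (Set.range (φ i) ∪ Set.range (φ j)) ∪
      Sum.inr '' ({i, j} ×ˢ Set.univ) ⊆ Set.range f := by
    rintro _ (⟨_, ⟨y', rfl⟩ | ⟨y', rfl⟩, rfl⟩ | ⟨⟨k, x'⟩, ⟨rfl | rfl, -⟩, rfl⟩)
    · exact exists_apply_eq_inl_of_apply_eq_inr hd hreg hindep hconn ha y'
    · exact exists_apply_eq_inl_of_apply_eq_inr hd hreg hindep hconn hb y'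
    · exact exists_apply_eq_inr_of_apply_eq_inr hreg hconn ha x'
    · exact exists_apply_eq_inr_of_apply_eq_inr hreg hconn hb x'
  have hcard := Set.ncard_le_ncard hsub
  rw [Set.ncard_image_inl_union_image_inr, Set.ncard_prod, Set.ncard_pair hij, Set.ncard_univ,
    Nat.card_coe_set_eq, Set.ncard_range_of_injective (f := f) f.injective] at hcard
  have hunion := Set.ncard_lt_ncard_union_of_ne (hφ.ne hij)
    (by rw [ncard_range_of_degOf hreg, ncard_range_of_degOf hreg])
  rw [ncard_range_of_degOf hreg] at hunion
  have hfar : (farSet H v).Nonempty := ⟨_, x.2⟩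
  have := one_add_add_ncard_farSet (v := v) hreg
  have := hfar.ncard_pos
  omega

end Copy

theorem free_gadget [Finite V] {d : ℕ} (hd : 1 ≤ d) (hreg : ∀ w, degOf H w = d)
    (hindep : ∀ x ∈ H.neighborSet v, ∀ y ∈ H.neighborSet v, ¬ H.Adj x y)
    (hconn : (H.induce (farSet H v)).Connected)
    (hφ : Function.Injective fun i => Set.range (φ i)) (hι : 2 ≤ d ∨ Subsingleton ι) :
    H.Free (gadget φ) := by
  rintro ⟨f⟩
  have hnbr (a : V) : ∃ b, H.Adj a b :=
    Set.nonempty_of_ncard_ne_zero (s := H.neighborSet a) (by rw [← degOf, hreg]; omega)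
  obtain ⟨i₀, a₀, x₀, ha₀⟩ : ∃ i a x, f a = .inr (i, x) := by
    obtain ⟨y, hvy⟩ := hnbr v
    have hadj := f.toHom.map_adj hvy
    rcases hv : f v with s | ⟨i, x⟩
    · rcases hy : f y with t | ⟨i, x⟩
      · simp [hv, hy] at hadj
      · exact ⟨i, y, x, hy⟩
    · exact ⟨i, v, x, hv⟩
  have hrange : Set.range f ⊆ Sum.inl '' Set.range (φ i₀) ∪ Sum.inr '' ({i₀} ×ˢ Set.univ) := by
    rintro _ ⟨a, rfl⟩
    rcases ha : f a with s | ⟨i, x⟩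
    · obtain ⟨b, hab⟩ := hnbr a
      have hadj := f.toHom.map_adj hab
      rcases hb : f b with t | ⟨j, x⟩
      · simp [ha, hb] at hadj
      · simp only [Copy.coe_toHom, ha, hb, gadget_adj_inl_inr] at hadj
        obtain ⟨y, rfl, -⟩ := hadj
        rw [index_eq_of_apply_eq_inr hreg hindep hconn hφ hι hb ha₀]
        exact .inl ⟨_, ⟨y, rfl⟩, rfl⟩
    · exact .inr ⟨(i, x), ⟨index_eq_of_apply_eq_inr hreg hindep hconn hφ hι ha ha₀, trivial⟩, rfl⟩
  have hcard := Set.ncard_le_ncard hrange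
  rw [Set.ncard_range_of_injective (f := f) f.injective, Set.ncard_image_inl_union_image_inr,
    Set.ncard_prod, Set.ncard_singleton, Set.ncard_univ, Nat.card_coe_set_eq,
    ncard_range_of_degOf hreg] at hcard
  have := one_add_add_ncard_farSet (v := v) hreg
  omega

end Gadget

end SimpleGraph

/-- Let `d ≥ 1` and let `H` be a finite `d`-regular graph with a vertex `v` whose
neighborhood `N(v)` is an independent set and such that `H − v − N(v)` is connected.
Then there is a finite `H`-free graph `G` with an independent set `S` of `2d − 1`
vertices such that for every subset `S' ⊆ S` of size `d`, adding a new vertex adjacent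
exactly to the vertices of `S'` creates a copy of `H`. -/
theorem stmt_15 (d : ℕ) (hd : 1 ≤ d) (V : Type) [Fintype V] (H : SimpleGraph V)
    (hreg : ∀ w : V, degOf H w = d) (v : V)
    (hindep : ∀ x ∈ H.neighborSet v, ∀ y ∈ H.neighborSet v, ¬ H.Adj x y)
    (hconn : (H.induce ({v} ∪ H.neighborSet v)ᶜ).Connected) :
    ∃ (n : ℕ) (G : SimpleGraph (Fin n)) (S : Finset (Fin n)),
      ¬ ContainsCopy G H ∧
      S.card = 2 * d - 1 ∧
      (∀ x ∈ S, ∀ y ∈ S, ¬ G.Adj x y) ∧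
      ∀ S' : Finset (Fin n), S' ⊆ S → S'.card = d →
        ContainsCopy (addVertex G (↑S' : Set (Fin n))) H := by
  classical
  choose φ hφ using fun A : {A : Finset (Fin (2 * d - 1)) // A.card = d} =>
    A.1.exists_embedding_range_eq (α := H.neighborSet v)
      (by rw [Nat.card_coe_set_eq, ← degOf, hreg, A.2])
  let e := Fintype.equivFin
    (Fin (2 * d - 1) ⊕ {A : Finset (Fin (2 * d - 1)) // A.card = d} × farSet H v)
  refine ⟨_, (gadget φ).map e, Finset.univ.map (Function.Embedding.inl.trans e.toEmbedding),
    ?_, ?_, ?_, ?_⟩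
  · rw [containsCopy_iff_isContained, ← isContained_congr_right (Iso.map e _)]
    refine free_gadget hd hreg hindep hconn (fun A B h => Subtype.ext ?_) ?_
    · simpa [hφ] using h
    · rcases hd.eq_or_lt with rfl | hd
      · exact .inr ⟨fun A B => Subtype.ext
          ((A.1.eq_univ_of_card A.2).trans (B.1.eq_univ_of_card B.2).symm)⟩
      · exact .inl hd
  · simp
  · simpa using fun s t h => gadget_adj_inl_inl ((Iso.map e (gadget φ)).map_adj_iff.1 h)
  · intro S' hS' hcard
    obtain ⟨A, -, rfl⟩ := Finset.subset_map_iff.1 hS'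
    rw [Finset.card_map] at hcard
    rw [containsCopy_iff_isContained]
    convert (isContained_addVertex_gadget hindep ⟨A, hcard⟩).trans
      ((Iso.map e _).addVertex _).isContained using 2
    rw [Set.range_comp, hφ, Finset.coe_map, ← Set.image_comp]
    rfl
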